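/- For the modified hinge loss φ(z) = max{1−z, 0}^{1+Δ} with Δ > 0, the optimal generic conditional φ-risk is C*(η) = 2^{1+Δ}·η·(1−η) / (η^{1/Δ} + (1−η)^{1/Δ})^Δ for η ∈ (0,1). -/

import Mathlib

/-!
Writing `u = max (1 - z) 0` and `v = max (1 + z) 0`, the only constraint linking `u, v ≥ 0` is
`u + v ≥ 2`, with equality for `|z| ≤ 1`. The convex function `η u^(1+Δ) + (1-η) v^(1+Δ)` is
minimized on that half-plane at the point of the line `u + v = 2` where the two partial
derivatives agree, `η u^Δ = (1-η) v^Δ`, namely `u₀ = 2b/(a+b)`, `v₀ = 2a/(a+b)` with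
`a = η^(1/Δ)`, `b = (1-η)^(1/Δ)`; the tangent-line bound for `t ↦ t^(1+Δ)` at `u₀` and `v₀`
proves minimality. At that point both sides of the balance equal `c = 2^Δ η (1-η) / (a+b)^Δ`,
so the minimum is `c u₀ + c v₀ = 2c`.
-/

open Real Set

lemma rpow_add_mul_rpow_sub_one_mul_sub_le {p w t : ℝ} (hp : 1 ≤ p) (hw : 0 < w) (ht : 0 ≤ t) :
    w ^ p + p * w ^ (p - 1) * (t - w) ≤ t ^ p := by
  have hx : -1 ≤ t / w - 1 := by linarith [div_nonneg ht hw.le]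
  have bernoulli : 1 + p * (t / w - 1) ≤ (t / w) ^ p := by
    simpa using one_add_mul_self_le_rpow_one_add hx hp
  have hwp : 0 < w ^ p := rpow_pos_of_pos hw p
  rw [div_rpow ht hw.le, le_div_iff₀ hwp] at bernoulli
  calc w ^ p + p * w ^ (p - 1) * (t - w)
      = (1 + p * (t / w - 1)) * w ^ p := by
        rw [rpow_sub_one hw.ne']; field_simp
    _ ≤ t ^ p := bernoulli

lemma mul_rpow_add_mul_rpow_le_of_balanced {q α β u₀ v₀ u v : ℝ} (hq : 0 ≤ q)
    (hα : 0 ≤ α) (hβ : 0 ≤ β) (hu₀ : 0 < u₀) (hv₀ : 0 < v₀)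
    (hbal : α * u₀ ^ q = β * v₀ ^ q) (hu : 0 ≤ u) (hv : 0 ≤ v) (huv : u₀ + v₀ ≤ u + v) :
    α * u₀ ^ (1 + q) + β * v₀ ^ (1 + q) ≤ α * u ^ (1 + q) + β * v ^ (1 + q) := by
  have hp : (1 : ℝ) ≤ 1 + q := by linarith
  have tangent_u := mul_le_mul_of_nonneg_left
    (rpow_add_mul_rpow_sub_one_mul_sub_le hp hu₀ hu) hα
  have tangent_v := mul_le_mul_of_nonneg_left
    (rpow_add_mul_rpow_sub_one_mul_sub_le hp hv₀ hv) hβ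
  simp only [add_sub_cancel_left] at tangent_u tangent_v
  have hc : 0 ≤ α * u₀ ^ q := mul_nonneg hα (rpow_nonneg hu₀.le q)
  have slack : 0 ≤ (1 + q) * (α * u₀ ^ q) * (u + v - (u₀ + v₀)) :=
    mul_nonneg (mul_nonneg (by linarith) hc) (by linarith)
  linear_combination tangent_u + tangent_v + slack + (1 + q) * (v - v₀) * hbal

lemma iInf_mul_max_rpow_add_mul_max_rpow {q α β u₀ v₀ : ℝ} (hq : 0 ≤ q)
    (hα : 0 ≤ α) (hβ : 0 ≤ β) (hu₀ : 0 < u₀) (hv₀ : 0 < v₀) (hsum : u₀ + v₀ = 2)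
    (hbal : α * u₀ ^ q = β * v₀ ^ q) :
    ⨅ z : ℝ, α * max (1 - z) 0 ^ (1 + q) + β * max (1 - (-z)) 0 ^ (1 + q) =
      2 * (α * u₀ ^ q) := by
  have hvalue : α * u₀ ^ (1 + q) + β * v₀ ^ (1 + q) = 2 * (α * u₀ ^ q) := by
    rw [rpow_add hu₀, rpow_add hv₀, rpow_one, rpow_one, ← hsum]
    linear_combination (-v₀) * hbal
  rw [← hvalue]
  refine IsGLB.ciInf_eq <|
    IsLeast.isGLB ⟨mem_range.2 ⟨1 - u₀, ?_⟩, forall_mem_range.2 fun z => ?_⟩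
  · rw [show 1 - -(1 - u₀) = v₀ by linarith, sub_sub_cancel, max_eq_left hu₀.le,
      max_eq_left hv₀.le]
  · exact mul_rpow_add_mul_rpow_le_of_balanced hq hα hβ hu₀ hv₀ hbal
      (le_max_right _ _) (le_max_right _ _)
      (by linarith [le_max_left (1 - z) 0, le_max_left (1 - -z) 0])

lemma rpow_two_mul_rpow_one_div_div {Δ y s : ℝ} (hΔ : Δ ≠ 0) (hy : 0 ≤ y) (hs : 0 ≤ s) :
    (2 * y ^ (1 / Δ) / s) ^ Δ = 2 ^ Δ * y / s ^ Δ := by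
  rw [div_rpow (by positivity) hs, mul_rpow zero_le_two (by positivity), one_div,
    rpow_inv_rpow hy hΔ]

theorem stmt16 (Δ : ℝ) (hΔ : 0 < Δ) :
    ∀ η ∈ Set.Ioo (0:ℝ) 1,
      (⨅ z : ℝ,
          η * max (1 - z) 0 ^ (1 + Δ) + (1 - η) * max (1 - (-z)) 0 ^ (1 + Δ)) =
        2 ^ (1 + Δ) * η * (1 - η) / (η ^ (1 / Δ) + (1 - η) ^ (1 / Δ)) ^ Δ := by
  rintro η ⟨hη₀, hη₁⟩
  set a := η ^ (1 / Δ)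
  set b := (1 - η) ^ (1 / Δ)
  have hs : 0 < a + b := add_pos (rpow_pos_of_pos hη₀ _) (rpow_pos_of_pos (by linarith) _)
  set c := 2 ^ Δ * η * (1 - η) / (a + b) ^ Δ
  have hu₀ : η * (2 * b / (a + b)) ^ Δ = c := by
    rw [rpow_two_mul_rpow_one_div_div hΔ.ne' (by linarith) hs.le]; ring
  have hv₀ : (1 - η) * (2 * a / (a + b)) ^ Δ = c := by
    rw [rpow_two_mul_rpow_one_div_div hΔ.ne' hη₀.le hs.le]; ring
  rw [iInf_mul_max_rpow_add_mul_max_rpow hΔ.le hη₀.le (by linarith) (by positivity)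
      (by positivity) (by field_simp; ring) (hu₀.trans hv₀.symm), hu₀, rpow_add two_pos,
    rpow_one]
  ring
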